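/- arXiv:2005.11666 — 7 statements merged into one kernel-verified Lean document; each statement's English description precedes it below -/
import Mathlib

section
/- Let a, b, c be rationals with ab+1 = r², ac+1 = s², bc+1 = t² for nonnegative rationals r, s, t, and abc ≠ 0. Then on the elliptic curve E: y² = (ax+1)(bx+1)(cx+1), the point S = (1/(abc), rst/(abc)) equals 2R, where R = ((rs+rt+st+1)/(abc), (r+s)(r+t)(s+t)/(abc)). -/
/-- The elliptic curve `E': y² = (x+ab)(x+ac)(x+bc)`, which is the Weierstrass model of
the curve `E: y² = (ax+1)(bx+1)(cx+1)` induced by the rational Diophantine triple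
`{a,b,c}` under the coordinate change `(x, y) ↦ (abc·x, abc·y)`. -/
def inducedCurve (a b c : ℚ) : WeierstrassCurve.Affine ℚ :=
  { a₁ := 0, a₂ := a * b + a * c + b * c, a₃ := 0,
    a₄ := a * b * c * (a + b + c), a₆ := (a * b * c) ^ 2 }

/-!
The tangent to `E'` at `R = (x_R, y_R)` has slope `r + s + t`: since
`(r+s)(r+t)(s+t) = (r+s+t)(rs+rt+st) - rst`, the line of that slope through `R` also passes
through `(1, -rst) = -S`, and the chord-tangent construction then gives `2R = S`. The only case
to exclude is a vertical tangent, `y_R = 0`: by nonnegativity two of `r, s, t` would vanish,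
making `1` a double root of the cubic and `S = (1, 0)` its singular point.
-/

open WeierstrassCurve WeierstrassCurve.Affine

namespace WeierstrassCurve.Affine.Point

variable {F : Type*} [Field F] [DecidableEq F] {W : WeierstrassCurve.Affine F}

lemma two_smul_some_of_slope {x y x' y' ℓ : F} (h : W.Nonsingular x y)
    (h' : W.Nonsingular x' y') (hy : y ≠ W.negY x y)
    (hℓ : ℓ * (y - W.negY x y) = 3 * x ^ 2 + 2 * W.a₂ * x + W.a₄ - W.a₁ * y)
    (hx' : x' = W.addX x x ℓ) (hy' : y' = W.addY x x y ℓ) :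
    2 • some x y h = some x' y' h' := by
  have hslope : W.slope x x y y = ℓ := by
    rw [slope_of_Y_ne rfl hy, ← hℓ, mul_div_cancel_right₀ _ (sub_ne_zero.mpr hy)]
  rw [two_smul, add_self_of_Y_ne hy, some.injEq, hslope]
  exact ⟨hx'.symm, hy'.symm⟩

end WeierstrassCurve.Affine.Point

section InducedCurve

variable {a b c r s t : ℚ}

@[simp]
lemma inducedCurve_a₁ : (inducedCurve a b c).a₁ = 0 := rfl

@[simp]
lemma inducedCurve_a₃ : (inducedCurve a b c).a₃ = 0 := rfl

@[simp]
lemma inducedCurve_negY (x y : ℚ) : (inducedCurve a b c).negY x y = -y := by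
  simp [negY]

variable (hab : a * b + 1 = r ^ 2) (hac : a * c + 1 = s ^ 2) (hbc : b * c + 1 = t ^ 2)
include hab hac hbc

lemma inducedCurve_a₂ : (inducedCurve a b c).a₂ = r ^ 2 + s ^ 2 + t ^ 2 - 3 :=
  show a * b + a * c + b * c = _ by linear_combination hab + hac + hbc

lemma inducedCurve_a₄ : (inducedCurve a b c).a₄ =
    (r ^ 2 - 1) * (s ^ 2 - 1) + (r ^ 2 - 1) * (t ^ 2 - 1) + (s ^ 2 - 1) * (t ^ 2 - 1) :=
  show a * b * c * (a + b + c) = _ by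
    linear_combination (s ^ 2 + t ^ 2 - 2) * hab + (a * b + t ^ 2 - 1) * hac +
      (a * b + a * c) * hbc

lemma inducedCurve_not_nonsingular_one_zero
    (h : r = 0 ∧ s = 0 ∨ r = 0 ∧ t = 0 ∨ s = 0 ∧ t = 0) :
    ¬ (inducedCurve a b c).Nonsingular 1 0 := by
  rw [nonsingular_iff', inducedCurve_a₁, inducedCurve_a₃, inducedCurve_a₂ hab hac hbc,
    inducedCurve_a₄ hab hac hbc]
  rintro ⟨-, hX | hY⟩
  · apply hX
    rcases h with ⟨rfl, rfl⟩ | ⟨rfl, rfl⟩ | ⟨rfl, rfl⟩ <;> ring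
  · exact hY (by ring)

lemma prod_pair_add_ne_zero_of_nonsingular (hr : 0 ≤ r) (hs : 0 ≤ s) (ht : 0 ≤ t)
    (hS : (inducedCurve a b c).Nonsingular 1 (r * s * t)) :
    (r + s) * (r + t) * (s + t) ≠ 0 := by
  intro h
  have hpair : r = 0 ∧ s = 0 ∨ r = 0 ∧ t = 0 ∨ s = 0 ∧ t = 0 := by
    rcases mul_eq_zero.mp h with h | h
    · rcases mul_eq_zero.mp h with h | h
      · exact .inl ⟨by linarith, by linarith⟩
      · exact .inr (.inl ⟨by linarith, by linarith⟩)
    · exact .inr (.inr ⟨by linarith, by linarith⟩)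
  have hrst : r * s * t = 0 := by
    rcases hpair with ⟨rfl, -⟩ | ⟨rfl, -⟩ | ⟨rfl, -⟩ <;> ring
  exact inducedCurve_not_nonsingular_one_zero hab hac hbc hpair (hrst ▸ hS)

end InducedCurve

theorem S_eq_two_R_general (a b c r s t : ℚ)
    (hr : 0 ≤ r) (hs : 0 ≤ s) (ht : 0 ≤ t)
    (hab : a * b + 1 = r ^ 2) (hac : a * c + 1 = s ^ 2) (hbc : b * c + 1 = t ^ 2)
    (hS : (inducedCurve a b c).Nonsingular 1 (r * s * t))
    (hR : (inducedCurve a b c).Nonsingular (r * s + r * t + s * t + 1)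
      ((r + s) * (r + t) * (s + t))) :
    (2 • WeierstrassCurve.Affine.Point.some _ _ hR : (inducedCurve a b c).Point) =
      WeierstrassCurve.Affine.Point.some _ _ hS := by
  have hyR := prod_pair_add_ne_zero_of_nonsingular hab hac hbc hr hs ht hS
  have ha₂ := inducedCurve_a₂ hab hac hbc
  refine Point.two_smul_some_of_slope hR hS (ℓ := r + s + t) ?_ ?_ ?_ ?_
  · rw [inducedCurve_negY]
    contrapose! hyR
    linarith
  · rw [inducedCurve_negY, ha₂, inducedCurve_a₄ hab hac hbc, inducedCurve_a₁]
    ring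
  · rw [addX, ha₂, inducedCurve_a₁]
    ring
  · rw [addY, negAddY, addX, inducedCurve_negY, ha₂, inducedCurve_a₁]
    ring

/-- Under the identification `(x, y) ↦ (abc·x, abc·y)` of `E: y² = (ax+1)(bx+1)(cx+1)`
with its Weierstrass model, the point `S = (1/(abc), rst/(abc))` corresponds to `(1, rst)`
and `R = ((rs+rt+st+1)/(abc), (r+s)(r+t)(s+t)/(abc))` corresponds to
`(rs+rt+st+1, (r+s)(r+t)(s+t))`.  Then `S = 2R` on `E`. -/
theorem S_eq_two_R (a b c r s t : ℚ) (habc : a * b * c ≠ 0)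
    (hr : 0 ≤ r) (hs : 0 ≤ s) (ht : 0 ≤ t)
    (hab : a * b + 1 = r ^ 2) (hac : a * c + 1 = s ^ 2) (hbc : b * c + 1 = t ^ 2)
    (hS : (inducedCurve a b c).Nonsingular 1 (r * s * t))
    (hR : (inducedCurve a b c).Nonsingular (r * s + r * t + s * t + 1)
      ((r + s) * (r + t) * (s + t))) :
    (2 • WeierstrassCurve.Affine.Point.some _ _ hR : (inducedCurve a b c).Point) =
      WeierstrassCurve.Affine.Point.some _ _ hS :=
  S_eq_two_R_general a b c r s t hr hs ht hab hac hbc hS hR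
end

section
/- Let a, b, c be distinct nonzero rationals with ab+1 = r², ac+1 = s², bc+1 = t² for nonzero rationals r, s, t. On the elliptic curve E': y² = (x+ab)(x+ac)(x+bc), the point S' = (1, rst) satisfies 3S' = O if and only if 3 + 4(ab+ac+bc) + 6abc(a+b+c) + 12(abc)² − (abc)²(a² + b² + c² − 2ab − 2ac − 2bc) = 0. -/
/-!
Since `rst ≠ 0`, `S'` is not `2`-torsion, so `3S' = O` iff `2S' = -S'` iff `x(2S') = x(S')`.
By the doubling formula `x(2P) - x(P) = -ψ₃(x(P)) / ψ₂(P)²` this happens iff the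
`3`-division polynomial `ψ₃` of `E'` vanishes at `x = 1`, and `ψ₃(1)` is the stated expression.
-/

/-- The elliptic curve `E': y² = (x+ab)(x+ac)(x+bc)` in Weierstrass form. -/
def curveE' (a b c : ℚ) : WeierstrassCurve.Affine ℚ :=
  { a₁ := 0, a₂ := a * b + a * c + b * c, a₃ := 0,
    a₄ := a * b * c * (a + b + c), a₆ := (a * b * c) ^ 2 }

open Polynomial

namespace WeierstrassCurve.Affine

variable {F : Type*} [Field F] [DecidableEq F] {W : Affine F} {x y : F}

/-- The doubling formula `x(2P) - x(P) = -ψ₃(x) / ψ₂(P)²`, where `ψ₂(P) = y - negY x y`. -/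
lemma addX_slope_self_sub_mul_sq_eq_neg_eval_Ψ₃ (h : W.Equation x y) (hy : y ≠ W.negY x y) :
    (W.addX x x (W.slope x x y y) - x) * (y - W.negY x y) ^ 2 = -W.Ψ₃.eval x := by
  rw [slope_of_Y_ne rfl hy, addX]
  set d := y - W.negY x y with hd
  set n := 3 * x ^ 2 + 2 * W.a₂ * x + W.a₄ - W.a₁ * y with hn
  have hd0 : d ≠ 0 := sub_ne_zero.mpr hy
  have hclear : ((n / d) ^ 2 + W.a₁ * (n / d) - W.a₂ - x - x - x) * d ^ 2
      = n ^ 2 + W.a₁ * n * d - (W.a₂ + 3 * x) * d ^ 2 := by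
    field_simp
    ring
  rw [hclear, hd, hn]
  rw [equation_iff] at h
  simp only [Ψ₃, b₂, b₄, b₆, b₈, negY, eval_add, eval_mul, eval_pow, eval_C, eval_X, eval_ofNat]
  linear_combination (-(W.a₁ ^ 2 + 4 * W.a₂ + 12 * x)) * h

lemma three_nsmul_some_eq_zero_iff_addX_eq (h : W.Nonsingular x y) (hy : y ≠ W.negY x y) :
    3 • Point.some x y h = 0 ↔ W.addX x x (W.slope x x y y) = x := by
  rw [succ_nsmul, two_nsmul, Point.add_self_of_Y_ne hy, add_eq_zero_iff_eq_neg, Point.neg_some,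
    Point.some.injEq]
  refine ⟨And.left, fun hx => ⟨hx, ?_⟩⟩
  simp only [addY, negAddY, hx, sub_self, mul_zero, zero_add]

lemma three_nsmul_some_eq_zero_iff (h : W.Nonsingular x y) (hy : y ≠ W.negY x y) :
    3 • Point.some x y h = 0 ↔ W.Ψ₃.eval x = 0 := by
  rw [three_nsmul_some_eq_zero_iff_addX_eq h hy, ← neg_eq_zero (a := W.Ψ₃.eval x),
    ← addX_slope_self_sub_mul_sq_eq_neg_eval_Ψ₃ h.left hy, mul_eq_zero, sub_eq_zero,
    or_iff_left (pow_ne_zero 2 (sub_ne_zero.mpr hy))]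

end WeierstrassCurve.Affine

lemma curveE'_negY (a b c x y : ℚ) : (curveE' a b c).negY x y = -y := by
  simp [curveE']

lemma eval_one_Ψ₃_curveE' (a b c : ℚ) : (curveE' a b c).Ψ₃.eval 1 =
    3 + 4 * (a * b + a * c + b * c) + 6 * (a * b * c) * (a + b + c) + 12 * (a * b * c) ^ 2
      - (a * b * c) ^ 2 * (a ^ 2 + b ^ 2 + c ^ 2 - 2 * a * b - 2 * a * c - 2 * b * c) := by
  simp only [WeierstrassCurve.Ψ₃, WeierstrassCurve.b₂, WeierstrassCurve.b₄, WeierstrassCurve.b₆,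
    WeierstrassCurve.b₈, curveE', eval_add, eval_mul, eval_pow, eval_C, eval_X, eval_ofNat]
  ring

theorem three_S_eq_zero_iff_general (a b c r s t : ℚ)
    (hr : r ≠ 0) (hs : s ≠ 0) (ht : t ≠ 0)
    (hS : (curveE' a b c).Nonsingular 1 (r * s * t)) :
    (3 • WeierstrassCurve.Affine.Point.some _ _ hS : (curveE' a b c).Point) = 0 ↔
      3 + 4 * (a * b + a * c + b * c) + 6 * (a * b * c) * (a + b + c)
        + 12 * (a * b * c) ^ 2
        - (a * b * c) ^ 2 * (a ^ 2 + b ^ 2 + c ^ 2 - 2 * a * b - 2 * a * c - 2 * b * c)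
        = 0 := by
  have hy : r * s * t ≠ (curveE' a b c).negY 1 (r * s * t) := by
    rw [curveE'_negY, ne_eq, self_eq_neg]
    exact mul_ne_zero (mul_ne_zero hr hs) ht
  rw [WeierstrassCurve.Affine.three_nsmul_some_eq_zero_iff hS hy, eval_one_Ψ₃_curveE']

/-- On `E': y² = (x+ab)(x+ac)(x+bc)`, the point `S' = (1, rst)` satisfies `3S' = O`
if and only if
`3 + 4(ab+ac+bc) + 6abc(a+b+c) + 12(abc)² − (abc)²(a²+b²+c²−2ab−2ac−2bc) = 0`. -/
theorem three_S_eq_zero_iff (a b c r s t : ℚ) (ha : a ≠ 0) (hb : b ≠ 0) (hc : c ≠ 0)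
    (hab' : a ≠ b) (hac' : a ≠ c) (hbc' : b ≠ c)
    (hr : r ≠ 0) (hs : s ≠ 0) (ht : t ≠ 0)
    (hab : a * b + 1 = r ^ 2) (hac : a * c + 1 = s ^ 2) (hbc : b * c + 1 = t ^ 2)
    (hS : (curveE' a b c).Nonsingular 1 (r * s * t)) :
    (3 • WeierstrassCurve.Affine.Point.some _ _ hS : (curveE' a b c).Point) = 0 ↔
      3 + 4 * (a * b + a * c + b * c) + 6 * (a * b * c) * (a + b + c)
        + 12 * (a * b * c) ^ 2
        - (a * b * c) ^ 2 * (a ^ 2 + b ^ 2 + c ^ 2 - 2 * a * b - 2 * a * c - 2 * b * c)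
        = 0 :=
  three_S_eq_zero_iff_general a b c r s t hr hs ht hS
end

section
/- For any rationals u, t with (ut+1)(t−u) ≠ 0, the numbers a = (ut+1)/(t−u), b = (u−t)/(ut+1), c = 4ut/((ut+1)(t−u)) satisfy: ab + 1, ac + 1, and bc + 1 are all squares of rational numbers. -/
/-- For rationals `u, t` with `(ut+1)(t−u) ≠ 0`, the numbers `a = (ut+1)/(t−u)`,
`b = (u−t)/(ut+1)`, `c = 4ut/((ut+1)(t−u))` form a rational Diophantine triple. -/
theorem parametrization_diophantine (u t : ℚ) (h : (u * t + 1) * (t - u) ≠ 0) :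
    let a := (u * t + 1) / (t - u)
    let b := (u - t) / (u * t + 1)
    let c := 4 * u * t / ((u * t + 1) * (t - u))
    (∃ q : ℚ, a * b + 1 = q ^ 2) ∧ (∃ q : ℚ, a * c + 1 = q ^ 2) ∧
      (∃ q : ℚ, b * c + 1 = q ^ 2) := by
  obtain ⟨hut, htu⟩ := mul_ne_zero_iff.mp h
  refine ⟨⟨0, ?_⟩, ⟨(t + u) / (t - u), ?_⟩, ⟨(u * t - 1) / (u * t + 1), ?_⟩⟩ <;>
    field_simp <;> ring
end

section
/- For any rational r with r(2r²−1) ≠ 0, the triple a = −2r(r−1)(r+1)/(2r²−1), b = −(2r²−1)/(2r), c = (2r−1)(2r+1)/(2r(2r²−1)) satisfies that ab+1, ac+1, bc+1 are all squares of rational numbers, and moreover the product of the conditions ab > 0 and bc > 0 is never simultaneously satisfiable: a, b, c never all have the same sign. -/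
/-!
The three products are explicit: `ab + 1 = r²`, `ac + 1 = (r / (2r² − 1))²` and
`bc + 1 = (1 / (2r))²`. So `ab > 0` and `bc > 0` would give `r² > 1` and `1 / (4r²) > 1`,
two numbers greater than `1` with product `1 / 4`; and `a, b, c` of one sign would make
both `ab` and `bc` positive.
-/

section DiophantineTriple

variable {K : Type*} [Field K] [NeZero (2 : K)] {r : K}

lemma orderSix_mul_ab_add_one (h₀ : r ≠ 0) (h₁ : 2 * r ^ 2 - 1 ≠ 0) :
    -2 * r * (r - 1) * (r + 1) / (2 * r ^ 2 - 1) * (-(2 * r ^ 2 - 1) / (2 * r)) + 1 = r ^ 2 := by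
  field_simp
  ring

lemma orderSix_mul_ac_add_one (h₀ : r ≠ 0) (h₁ : 2 * r ^ 2 - 1 ≠ 0) :
    -2 * r * (r - 1) * (r + 1) / (2 * r ^ 2 - 1) *
        ((2 * r - 1) * (2 * r + 1) / (2 * r * (2 * r ^ 2 - 1))) + 1 =
      (r / (2 * r ^ 2 - 1)) ^ 2 := by
  field_simp
  ring

lemma orderSix_mul_bc_add_one (h₀ : r ≠ 0) (h₁ : 2 * r ^ 2 - 1 ≠ 0) :
    -(2 * r ^ 2 - 1) / (2 * r) * ((2 * r - 1) * (2 * r + 1) / (2 * r * (2 * r ^ 2 - 1))) + 1 =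
      (2 * r)⁻¹ ^ 2 := by
  field_simp
  ring

end DiophantineTriple

lemma not_one_lt_sq_and_one_lt_inv_two_mul_sq {K : Type*} [Field K] [LinearOrder K]
    [IsStrictOrderedRing K] (r : K) : ¬(1 < r ^ 2 ∧ 1 < (2 * r)⁻¹ ^ 2) := by
  rintro ⟨hr, hr'⟩
  have h₀ : r ≠ 0 := by rintro rfl; norm_num at hr
  have hprod : r ^ 2 * (2 * r)⁻¹ ^ 2 = 1 / 4 := by field_simp; ring
  have hgt : 1 < r ^ 2 * (2 * r)⁻¹ ^ 2 := one_lt_mul_of_le_of_lt hr.le hr'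
  rw [hprod] at hgt
  norm_num at hgt

lemma mul_pos_and_mul_pos_of_same_sign {R : Type*} [Ring R] [LinearOrder R] [IsStrictOrderedRing R]
    {a b c : R} (h : (0 < a ∧ 0 < b ∧ 0 < c) ∨ (a < 0 ∧ b < 0 ∧ c < 0)) :
    0 < a * b ∧ 0 < b * c := by
  rcases h with ⟨ha, hb, hc⟩ | ⟨ha, hb, hc⟩
  · exact ⟨mul_pos ha hb, mul_pos hb hc⟩
  · exact ⟨mul_pos_of_neg_of_neg ha hb, mul_pos_of_neg_of_neg hb hc⟩

/-- For rational `r` with `r(2r²−1) ≠ 0`, the triple `a = −2r(r−1)(r+1)/(2r²−1)`,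
`b = −(2r²−1)/(2r)`, `c = (2r−1)(2r+1)/(2r(2r²−1))` is a rational Diophantine triple,
and the conditions `ab > 0` and `bc > 0` are never simultaneously satisfied:
`a, b, c` never all have the same sign. -/
theorem order_six_family (r : ℚ) (hr : r * (2 * r ^ 2 - 1) ≠ 0) :
    let a := -2 * r * (r - 1) * (r + 1) / (2 * r ^ 2 - 1)
    let b := -(2 * r ^ 2 - 1) / (2 * r)
    let c := (2 * r - 1) * (2 * r + 1) / (2 * r * (2 * r ^ 2 - 1))
    ((∃ q : ℚ, a * b + 1 = q ^ 2) ∧ (∃ q : ℚ, a * c + 1 = q ^ 2) ∧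
      (∃ q : ℚ, b * c + 1 = q ^ 2)) ∧
    ¬(0 < a * b ∧ 0 < b * c) ∧
    ¬((0 < a ∧ 0 < b ∧ 0 < c) ∨ (a < 0 ∧ b < 0 ∧ c < 0)) := by
  intro a b c
  have h₀ : r ≠ 0 := left_ne_zero_of_mul hr
  have h₁ : 2 * r ^ 2 - 1 ≠ 0 := right_ne_zero_of_mul hr
  have hab : a * b + 1 = r ^ 2 := orderSix_mul_ab_add_one h₀ h₁
  have hac : a * c + 1 = (r / (2 * r ^ 2 - 1)) ^ 2 := orderSix_mul_ac_add_one h₀ h₁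
  have hbc : b * c + 1 = (2 * r)⁻¹ ^ 2 := orderSix_mul_bc_add_one h₀ h₁
  have hnot : ¬(0 < a * b ∧ 0 < b * c) := fun ⟨hpab, hpbc⟩ =>
    not_one_lt_sq_and_one_lt_inv_two_mul_sq r ⟨by linarith, by linarith⟩
  exact ⟨⟨⟨_, hab⟩, ⟨_, hac⟩, ⟨_, hbc⟩⟩, hnot, fun h => hnot (mul_pos_and_mul_pos_of_same_sign h)⟩
end

section
/- For any rational T with T(T²−1) ≠ 0, the numbers a = 2T/(T²−1), b = (1−T²)/(2T), c = (6T²−T⁴−1)/(2T(T²−1)) satisfy that ab+1, ac+1, bc+1 are all squares of rational numbers, and ab = −1, so a, b, c have mixed signs. -/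
/-! The triple is `{a, -1/a, a - 1/a}`: `a * b = -1` and `c = a + b`, hence
`a * c + 1 = a ^ 2` and `b * c + 1 = b ^ 2`, while `a * b < 0` forces mixed signs. -/

theorem exists_sq_of_mul_eq_neg_one {R : Type*} [CommRing R] {a b : R} (hab : a * b = -1) :
    (∃ q : R, a * b + 1 = q ^ 2) ∧ (∃ q : R, a * (a + b) + 1 = q ^ 2) ∧
      (∃ q : R, b * (a + b) + 1 = q ^ 2) :=
  ⟨⟨0, by rw [hab]; ring⟩, ⟨a, by linear_combination hab⟩, ⟨b, by linear_combination hab⟩⟩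

theorem not_same_sign_of_mul_neg {R : Type*} [Ring R] [LinearOrder R] [IsStrictOrderedRing R]
    {a b : R} (c : R) (hab : a * b < 0) :
    ¬((0 < a ∧ 0 < b ∧ 0 < c) ∨ (a < 0 ∧ b < 0 ∧ c < 0)) := by
  rintro (⟨ha, hb, -⟩ | ⟨ha, hb, -⟩)
  · exact (mul_pos ha hb).not_gt hab
  · exact (mul_pos_of_neg_of_neg ha hb).not_gt hab

theorem z2z8_mul_eq_neg_one {T : ℚ} (hT : T * (T ^ 2 - 1) ≠ 0) :
    2 * T / (T ^ 2 - 1) * ((1 - T ^ 2) / (2 * T)) = -1 := by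
  have hT0 : T ≠ 0 := left_ne_zero_of_mul hT
  have hT1 : T ^ 2 - 1 ≠ 0 := right_ne_zero_of_mul hT
  field_simp
  ring

theorem z2z8_third_eq_add {T : ℚ} (hT : T * (T ^ 2 - 1) ≠ 0) :
    (6 * T ^ 2 - T ^ 4 - 1) / (2 * T * (T ^ 2 - 1)) =
      2 * T / (T ^ 2 - 1) + (1 - T ^ 2) / (2 * T) := by
  have hT0 : T ≠ 0 := left_ne_zero_of_mul hT
  have hT1 : T ^ 2 - 1 ≠ 0 := right_ne_zero_of_mul hT
  field_simp
  ring

/-- For rational `T` with `T(T²−1) ≠ 0`, the numbers `a = 2T/(T²−1)`,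
`b = (1−T²)/(2T)`, `c = (6T²−T⁴−1)/(2T(T²−1))` form a rational Diophantine triple,
and `ab = −1`, so `a, b, c` have mixed signs. -/
theorem z2z8_parametrization (T : ℚ) (hT : T * (T ^ 2 - 1) ≠ 0) :
    let a := 2 * T / (T ^ 2 - 1)
    let b := (1 - T ^ 2) / (2 * T)
    let c := (6 * T ^ 2 - T ^ 4 - 1) / (2 * T * (T ^ 2 - 1))
    ((∃ q : ℚ, a * b + 1 = q ^ 2) ∧ (∃ q : ℚ, a * c + 1 = q ^ 2) ∧
      (∃ q : ℚ, b * c + 1 = q ^ 2)) ∧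
    a * b = -1 ∧
    ¬((0 < a ∧ 0 < b ∧ 0 < c) ∨ (a < 0 ∧ b < 0 ∧ c < 0)) := by
  intro a b c
  have hab : a * b = -1 := z2z8_mul_eq_neg_one hT
  have hc : c = a + b := z2z8_third_eq_add hT
  rw [hc]
  exact ⟨exists_sq_of_mul_eq_neg_one hab, hab,
    not_same_sign_of_mul_neg (a + b) (by rw [hab]; norm_num)⟩
end

section
/- Let r be rational with ab+1 = r², b = (r²−1)/a, c = a+b+2r, and a ≠ 0, r ∉ {0, ±1}. Then the condition (ab+1)² = ab(c−a)(c−b) is equivalent to the quadratic equation (2r³−2r)a² + (4r⁴−6r²+1)a + 2r⁵ + 2r − 4r³ = 0, whose discriminant in a is (2r²−1)²(1 − 4r⁴ + 4r²)... i.e., this quadratic has a rational root a if and only if 1 + 4r² − 4r⁴ is a square of a rational (for r with 2r³−2r ≠ 0). -/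
theorem exists_quadratic_eq_zero_iff_exists_sq_eq_discrim {K : Type*} [Field K] [NeZero (2 : K)]
    {a b c : K} (ha : a ≠ 0) :
    (∃ x, a * x ^ 2 + b * x + c = 0) ↔ ∃ s, s ^ 2 = discrim a b c := by
  simp only [sq]
  constructor
  · rintro ⟨x, hx⟩
    exact ⟨2 * a * x + b, by rw [discrim_eq_sq_of_quadratic_eq_zero hx, sq]⟩
  · rintro ⟨s, hs⟩
    exact exists_quadratic_eq_zero ha ⟨s, hs.symm⟩

theorem order_four_condition_iff_quadratic {K : Type*} [Field K] {a : K} (r : K) (ha : a ≠ 0) :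
    let b := (r ^ 2 - 1) / a
    let c := a + b + 2 * r
    ((a * b + 1) ^ 2 = a * b * (c - a) * (c - b) ↔
      (2 * r ^ 3 - 2 * r) * a ^ 2 + (4 * r ^ 4 - 6 * r ^ 2 + 1) * a
        + 2 * r ^ 5 + 2 * r - 4 * r ^ 3 = 0) := by
  intro b c
  have defect : a * ((a * b + 1) ^ 2 - a * b * (c - a) * (c - b)) =
      -((2 * r ^ 3 - 2 * r) * a ^ 2 + (4 * r ^ 4 - 6 * r ^ 2 + 1) * a
        + 2 * r ^ 5 + 2 * r - 4 * r ^ 3) := by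
    simp only [b, c]
    field_simp
    ring
  rw [← sub_eq_zero, ← mul_eq_zero_iff_left ha, defect, neg_eq_zero]

theorem two_mul_pow_three_sub_two_mul_ne_zero {K : Type*} [Field K] [NeZero (2 : K)] {r : K}
    (hr0 : r ≠ 0) (hr1 : r ≠ 1) (hrm1 : r ≠ -1) : 2 * r ^ 3 - 2 * r ≠ 0 := by
  have factor : 2 * r ^ 3 - 2 * r = 2 * r * (r - 1) * (r + 1) := by ring
  rw [factor]
  refine mul_ne_zero (mul_ne_zero (mul_ne_zero two_ne_zero hr0) (sub_ne_zero.2 hr1)) ?_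
  exact fun h => hrm1 (eq_neg_of_add_eq_zero_left h)

/-- Let `r` be rational with `r ∉ {0, ±1}` and `a ≠ 0`, and set `b = (r²−1)/a`
(so `ab + 1 = r²`) and `c = a + b + 2r`.  Then the order-4 condition
`(ab+1)² = ab(c−a)(c−b)` is equivalent to the quadratic equation
`(2r³−2r)a² + (4r⁴−6r²+1)a + 2r⁵ + 2r − 4r³ = 0`; the discriminant of this
quadratic in `a` is `1 + 4r² − 4r⁴`, and the quadratic has a rational root `a`
if and only if `1 + 4r² − 4r⁴` is a square of a rational. -/
theorem order_four_quadratic (r : ℚ) (hr0 : r ≠ 0) (hr1 : r ≠ 1) (hrm1 : r ≠ -1) :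
    (∀ a : ℚ, a ≠ 0 →
      let b := (r ^ 2 - 1) / a
      let c := a + b + 2 * r
      ((a * b + 1) ^ 2 = a * b * (c - a) * (c - b) ↔
        (2 * r ^ 3 - 2 * r) * a ^ 2 + (4 * r ^ 4 - 6 * r ^ 2 + 1) * a
          + 2 * r ^ 5 + 2 * r - 4 * r ^ 3 = 0)) ∧
    (4 * r ^ 4 - 6 * r ^ 2 + 1) ^ 2
        - 4 * (2 * r ^ 3 - 2 * r) * (2 * r ^ 5 + 2 * r - 4 * r ^ 3)
      = 1 + 4 * r ^ 2 - 4 * r ^ 4 ∧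
    ((∃ a : ℚ, (2 * r ^ 3 - 2 * r) * a ^ 2 + (4 * r ^ 4 - 6 * r ^ 2 + 1) * a
        + 2 * r ^ 5 + 2 * r - 4 * r ^ 3 = 0) ↔
      ∃ q : ℚ, q ^ 2 = 1 + 4 * r ^ 2 - 4 * r ^ 4) := by
  have discrim_eq : discrim (2 * r ^ 3 - 2 * r) (4 * r ^ 4 - 6 * r ^ 2 + 1)
      (2 * r ^ 5 + 2 * r - 4 * r ^ 3) = 1 + 4 * r ^ 2 - 4 * r ^ 4 := by
    rw [discrim]; ring
  refine ⟨fun a ha => order_four_condition_iff_quadratic r ha, discrim_eq, ?_⟩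
  have regroup : ∀ a : ℚ, (2 * r ^ 3 - 2 * r) * a ^ 2 + (4 * r ^ 4 - 6 * r ^ 2 + 1) * a
      + 2 * r ^ 5 + 2 * r - 4 * r ^ 3 = (2 * r ^ 3 - 2 * r) * a ^ 2
      + (4 * r ^ 4 - 6 * r ^ 2 + 1) * a + (2 * r ^ 5 + 2 * r - 4 * r ^ 3) := fun a => by ring
  simp only [regroup, ← discrim_eq]
  exact exists_quadratic_eq_zero_iff_exists_sq_eq_discrim
    (two_mul_pow_three_sub_two_mul_ne_zero hr0 hr1 hrm1)
end

section
/- The quartic equation y² = 1 + 4x² − 4x⁴ has infinitely many rational solutions; in particular the associated elliptic curve Y² = X³ + X² + X + 1 has the rational point (0,1) of infinite order. -/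
/-- The elliptic curve `Y² = X³ + X² + X + 1`. -/
def curveE1 : WeierstrassCurve.Affine ℚ :=
  { a₁ := 0, a₂ := 1, a₃ := 0, a₄ := 1, a₆ := 1 }

/-!
The duplication formula on `Y² = X³ + X² + X + 1` sends `x` to
`(x⁴ - 2x² - 8x - 3) / (4(x³ + x² + x + 1))`. When `|x|₂ > 1` the leading terms dominate 2-adically,
so `|x(2Q)|₂ = 4 |x(Q)|₂`. Starting from `2P = (-3/4, -5/8)` for `P = (0, 1)`, the points `2ⁿP`,
`n ≥ 1`, have `|x|₂ = 4ⁿ`; they are pairwise distinct, so `P` has infinite order, and the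
birational map to the quartic sends them to infinitely many distinct rational points.
-/

open Polynomial IsAbsoluteValue WeierstrassCurve.Affine

theorem padicNorm_aeval_of_monic {p : ℕ} [Fact p.Prime] {f : ℤ[X]} (hf : f.Monic) {x : ℚ}
    (hx : 1 < padicNorm p x) : padicNorm p (aeval x f) = padicNorm p x ^ f.natDegree := by
  have heval : aeval x f =
      x ^ f.natDegree + ∑ i ∈ Finset.range f.natDegree, (f.coeff i : ℚ) * x ^ i := by
    conv_lhs => rw [hf.as_sum]
    simp
  have hlower : padicNorm p (∑ i ∈ Finset.range f.natDegree, (f.coeff i : ℚ) * x ^ i)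
      < padicNorm p x ^ f.natDegree := by
    refine padicNorm.sum_lt' (fun i hi => ?_) (by positivity)
    calc padicNorm p ((f.coeff i : ℚ) * x ^ i) ≤ padicNorm p x ^ i := by
          rw [padicNorm.mul, abv_pow (padicNorm p)]
          exact mul_le_of_le_one_left (by positivity) (padicNorm.of_int _)
      _ < padicNorm p x ^ f.natDegree := pow_lt_pow_right₀ hx (Finset.mem_range.1 hi)
  rw [← abv_pow (padicNorm p)] at hlower
  rw [heval, padicNorm.add_eq_max_of_ne hlower.ne', max_eq_left hlower.le, abv_pow (padicNorm p)]

theorem padicNorm_two_four : padicNorm 2 4 = 1 / 4 := by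
  rw [show (4 : ℚ) = (2 : ℕ) ^ 2 by norm_num, abv_pow (padicNorm 2),
    padicNorm.padicNorm_p_of_prime]
  norm_num

theorem padicNorm_two_curveE1_doubleX {x : ℚ} (hx : 1 < padicNorm 2 x) :
    padicNorm 2 ((x ^ 4 - 2 * x ^ 2 - 8 * x - 3) / (4 * (x ^ 3 + x ^ 2 + x + 1))) =
      4 * padicNorm 2 x := by
  have hnum := padicNorm_aeval_of_monic (f := X ^ 4 - 2 * X ^ 2 - 8 * X - 3) (by monicity!) hx
  have hden := padicNorm_aeval_of_monic (f := X ^ 3 + X ^ 2 + X + 1) (by monicity!) hx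
  rw [show (X ^ 4 - 2 * X ^ 2 - 8 * X - 3 : ℤ[X]).natDegree = 4 by compute_degree!] at hnum
  rw [show (X ^ 3 + X ^ 2 + X + 1 : ℤ[X]).natDegree = 3 by compute_degree!] at hden
  simp only [map_sub, map_add, map_mul, map_pow, map_one, aeval_X, map_ofNat] at hnum hden
  have hpos : 0 < padicNorm 2 x := one_pos.trans hx
  rw [padicNorm.div, padicNorm.mul, hnum, hden, padicNorm_two_four]
  field_simp

namespace WeierstrassCurve.Affine

variable {F : Type*} [Field F] [DecidableEq F] {W : WeierstrassCurve.Affine F} {x y : F}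

theorem addX_self_slope_eq (h : W.Equation x y) (hy : y ≠ W.negY x y) :
    W.addX x x (W.slope x x y y) =
      (x ^ 4 - W.b₄ * x ^ 2 - 2 * W.b₆ * x - W.b₈) /
        (4 * x ^ 3 + W.b₂ * x ^ 2 + 2 * W.b₄ * x + W.b₆) := by
  rw [equation_iff] at h
  have hD : y - W.negY x y ≠ 0 := sub_ne_zero.2 hy
  have hsq : (y - W.negY x y) ^ 2 = 4 * x ^ 3 + W.b₂ * x ^ 2 + 2 * W.b₄ * x + W.b₆ := by
    simp only [negY, b₂, b₄, b₆]
    linear_combination 4 * h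
  rw [slope_of_Y_ne rfl hy, addX, ← hsq, eq_div_iff (pow_ne_zero 2 hD)]
  field_simp
  simp only [negY, b₄, b₆, b₈]
  linear_combination (-(8 * x + 4 * W.a₂ + W.a₁ ^ 2)) * h

theorem Point.exists_two_nsmul_some_eq (h : W.Nonsingular x y) (hy : y ≠ W.negY x y) :
    ∃ y' h', 2 • Point.some x y h = Point.some ((x ^ 4 - W.b₄ * x ^ 2 - 2 * W.b₆ * x - W.b₈) /
        (4 * x ^ 3 + W.b₂ * x ^ 2 + 2 * W.b₄ * x + W.b₆)) y' h' := by
  rw [← addX_self_slope_eq h.1 hy]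
  exact ⟨_, _, by rw [two_nsmul, Point.add_self_of_Y_ne hy]⟩

end WeierstrassCurve.Affine

theorem curveE1_equation_iff {x y : ℚ} :
    curveE1.Equation x y ↔ y ^ 2 = x ^ 3 + x ^ 2 + x + 1 := by
  simp [equation_iff, curveE1]

theorem curveE1_nonsingular_zero_one : curveE1.Nonsingular 0 1 := by
  refine ⟨curveE1_equation_iff.2 (by norm_num), ?_⟩
  simp [curveE1, polynomialX, polynomialY]

theorem curveE1_exists_two_nsmul_some_eq {x y : ℚ} (h : curveE1.Nonsingular x y) (hy : y ≠ 0) :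
    ∃ y' h', 2 • Point.some x y h =
      Point.some ((x ^ 4 - 2 * x ^ 2 - 8 * x - 3) / (4 * (x ^ 3 + x ^ 2 + x + 1))) y' h' := by
  have hx' : (x ^ 4 - curveE1.b₄ * x ^ 2 - 2 * curveE1.b₆ * x - curveE1.b₈) /
      (4 * x ^ 3 + curveE1.b₂ * x ^ 2 + 2 * curveE1.b₄ * x + curveE1.b₆) =
      (x ^ 4 - 2 * x ^ 2 - 8 * x - 3) / (4 * (x ^ 3 + x ^ 2 + x + 1)) := by
    simp only [curveE1, WeierstrassCurve.b₂, WeierstrassCurve.b₄, WeierstrassCurve.b₆,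
      WeierstrassCurve.b₈]
    ring
  rw [← hx']
  refine Point.exists_two_nsmul_some_eq h fun hneg => hy ?_
  simp only [negY, curveE1] at hneg
  linarith

theorem curveE1_Y_ne_zero {x y : ℚ} (h : curveE1.Equation x y) (hx : 1 < padicNorm 2 x) :
    y ≠ 0 := by
  rintro rfl
  have hx1 : x = -1 := by
    have : (x + 1) * (x ^ 2 + 1) = 0 := by linear_combination -(curveE1_equation_iff.1 h)
    exact eq_neg_of_add_eq_zero_left ((mul_eq_zero.1 this).resolve_right (by positivity))
  simp [hx1] at hx

theorem curveE1_exists_two_pow_succ_nsmul_eq_some (n : ℕ) :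
    ∃ x y h, (2 ^ (n + 1)) • Point.some 0 1 curveE1_nonsingular_zero_one = Point.some x y h ∧
      padicNorm 2 x = 4 ^ (n + 1) := by
  induction n with
  | zero =>
    obtain ⟨y, h, e⟩ := curveE1_exists_two_nsmul_some_eq curveE1_nonsingular_zero_one one_ne_zero
    refine ⟨_, y, h, by rwa [pow_one], ?_⟩
    have h3 : padicNorm 2 3 = 1 := by
      simpa only [Nat.cast_ofNat] using (padicNorm.nat_eq_one_iff (p := 2) 3).2 (by decide)
    rw [show (0 ^ 4 - 2 * 0 ^ 2 - 8 * 0 - 3) / (4 * (0 ^ 3 + 0 ^ 2 + 0 + 1)) = -(3 / 4 : ℚ) by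
        norm_num, padicNorm.neg, padicNorm.div, h3, padicNorm_two_four]
    norm_num
  | succ n ih =>
    obtain ⟨x, y, h, e, hx⟩ := ih
    have hx1 : 1 < padicNorm 2 x := hx ▸ one_lt_pow₀ (by norm_num) n.succ_ne_zero
    obtain ⟨y', h', e'⟩ := curveE1_exists_two_nsmul_some_eq h (curveE1_Y_ne_zero h.1 hx1)
    refine ⟨_, y', h', by rw [pow_succ, mul_nsmul, e, e'], ?_⟩
    rw [padicNorm_two_curveE1_doubleX hx1, hx, pow_succ' 4 (n + 1)]

/-- Inverse of the birational map `(u, v) ↦ ((1 - v) / (2u²), u (1 + x²))` from the quartic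
onto `curveE1`. -/
def toQuartic (p : ℚ × ℚ) : ℚ × ℚ :=
  (p.2 / (1 + p.1 ^ 2), (1 - 2 * p.1 - p.1 ^ 2) / (1 + p.1 ^ 2))

theorem mapsTo_toQuartic :
    Set.MapsTo toQuartic {p | curveE1.Equation p.1 p.2}
      {q | q.2 ^ 2 = 1 + 4 * q.1 ^ 2 - 4 * q.1 ^ 4} := by
  rintro ⟨x, y⟩ h
  have h := curveE1_equation_iff.1 h
  have hd : 1 + x ^ 2 ≠ 0 := by positivity
  simp only [toQuartic, Set.mem_ofPred_eq]
  field_simp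
  linear_combination (4 * y ^ 2 + 4 * x - 4 * x ^ 2 + 4 * x ^ 3 - 4 * x ^ 4) * h

theorem fst_eq_of_toQuartic {x y : ℚ} (h : curveE1.Equation x y) (hy : y ≠ 0) :
    x = (1 - (toQuartic (x, y)).2) / (2 * (toQuartic (x, y)).1 ^ 2) := by
  have h := curveE1_equation_iff.1 h
  have hd : 1 + x ^ 2 ≠ 0 := by positivity
  simp only [toQuartic]
  field_simp
  linear_combination (2 * x) * h

theorem injOn_toQuartic : Set.InjOn toQuartic {p | curveE1.Equation p.1 p.2 ∧ p.2 ≠ 0} := by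
  rintro ⟨x, y⟩ ⟨h, hy⟩ ⟨x', y'⟩ ⟨h', hy'⟩ e
  have hx : x = x' := by
    rw [fst_eq_of_toQuartic (x := x) h hy, fst_eq_of_toQuartic (x := x') h' hy', e]
  subst hx
  have hd : 1 + x ^ 2 ≠ 0 := by positivity
  have := congrArg Prod.fst e
  simp only [toQuartic, div_left_inj' hd] at this
  rw [this]

/-- The quartic `y² = 1 + 4x² − 4x⁴` has infinitely many rational solutions;
in particular the associated elliptic curve `Y² = X³ + X² + X + 1` has the
rational point `(0, 1)` of infinite order. -/
theorem quartic_infinite_and_point_infinite_order :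
    {p : ℚ × ℚ | p.2 ^ 2 = 1 + 4 * p.1 ^ 2 - 4 * p.1 ^ 4}.Infinite ∧
    ∀ h : curveE1.Nonsingular 0 1,
      ¬ IsOfFinAddOrder (WeierstrassCurve.Affine.Point.some 0 1 h) := by
  choose x y h hP hx using curveE1_exists_two_pow_succ_nsmul_eq_some
  have hx_inj : Function.Injective x := fun m n e => by
    have := (hx m).symm.trans ((congrArg (padicNorm 2) e).trans (hx n))
    exact Nat.succ_injective (pow_right_injective₀ (by norm_num) (by norm_num) this)
  constructor
  · have hcurve : {p : ℚ × ℚ | curveE1.Equation p.1 p.2 ∧ p.2 ≠ 0}.Infinite :=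
      Set.infinite_of_injective_forall_mem (f := fun n => (x n, y n))
        (fun m n e => hx_inj (congrArg Prod.fst e))
        (fun n => ⟨(h n).1, curveE1_Y_ne_zero (h n).1
          (hx n ▸ one_lt_pow₀ (by norm_num) n.succ_ne_zero)⟩)
    exact (hcurve.image injOn_toQuartic).mono
      (mapsTo_toQuartic.mono_left fun _ hp => hp.1).image_subset
  · intro h₀ hfin
    refine Set.infinite_of_injective_forall_mem
      (f := fun n : ℕ => (2 ^ (n + 1)) • Point.some 0 1 h₀) (fun m n e => hx_inj ?_)
      (fun n => (AddSubmonoid.mem_multiples_iff _ _).2 ⟨_, rfl⟩) hfin.finite_multiples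
    exact (Point.some.inj ((hP m).symm.trans (e.trans (hP n)))).1
end
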